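/- For distinct lines ℓ and ℓ' in ℍ^n, the composite r_ℓ ∘ r_{ℓ'} of the reflections of order 2 in ℓ and ℓ' has order 5 (as an invertible ℍ-linear map) if and only if the angle between ℓ and ℓ' is either π/5 or 2π/5. -/

import Mathlib

noncomputable section

local notation "ℍ" => Quaternion ℝ

/-- The standard Hermitian form on `ℍⁿ`, conjugate-linear in the first variable and
ℍ-linear in the second: `⟨x,y⟩ = ∑ i, star (x i) * y i`. -/
def qInner {n : ℕ} (x y : Fin n → ℍ) : ℍ := ∑ i, star (x i) * y i

/-- The norm `|v| = √⟨v,v⟩` on `ℍⁿ`. -/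
def qNorm {n : ℕ} (v : Fin n → ℍ) : ℝ := Real.sqrt (qInner v v).re

/-- The ℍ-line `vℍ` spanned by `v` (the set of right scalar multiples of `v`). -/
def lineOf {n : ℕ} (v : Fin n → ℍ) : Set (Fin n → ℍ) := {w | ∃ c : ℍ, w = fun i => v i * c}

/-- `ℓ` and `ℓ'` are at angle `θ ∈ [0, π/2]`: for all nonzero `v ∈ ℓ`, `w ∈ ℓ'`,
`|⟨v,w⟩| = cos θ · |v|·|w|`. -/
def atAngle {n : ℕ} (ℓ ℓ' : Set (Fin n → ℍ)) (θ : ℝ) : Prop :=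
  ∀ v ∈ ℓ, ∀ w ∈ ℓ', v ≠ 0 → w ≠ 0 → ‖qInner v w‖ = Real.cos θ * (qNorm v * qNorm w)

/-- The reflection of order 2 in the line `αℍ`: `r(v) = v − α·(2/⟨α,α⟩)·⟨α,v⟩`. -/
def reflectIn {n : ℕ} (α : Fin n → ℍ) (v : Fin n → ℍ) : Fin n → ℍ :=
  fun i => v i - α i * ((2 / qInner α α) * qInner α v)

/-! Put `T = r_v ∘ r_w` and `s = 4 cos² θ - 2 = 2 cos 2θ`. Since `r_v r_w + r_w r_v` acts as
`s` on `v` and on `w`, it does so on their right `ℍ`-span `P`; composing with `T` gives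
`T² - sT + 1 = 0` on `P`. As `Tu - u ∈ P` for every `u`, `(T² - sT + 1)(T - 1) = 0`, and when
`s² + s - 1 = 0` the factorisation `X⁵ - 1 = (X² + (s + 1)X + 1)(X² - sX + 1)(X - 1)` gives
`T⁵ = 1`. Conversely, reducing `X⁵ - 1` modulo `X² - sX + 1` and evaluating at `w`, where
`Tw = v·(2⟨v,w⟩/|v|²) - w`, yields a relation between `v` and `w` whose coefficients vanish only
if `s² + s - 1 = 0`. For `c = cos θ ≥ 0` this reads `16c⁴ - 12c² + 1 = 0`, whose nonnegative
roots are `cos (π/5)` and `cos (2π/5)`. -/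

open scoped RightActions
open Polynomial

theorem pow_five_sub_one_eq_mul_mul {R A : Type*} [CommRing R] [Ring A] [Algebra R A] (a : A)
    {s : R} (hs : s ^ 2 + s - 1 = 0) :
    a ^ 5 - 1 = (a ^ 2 + (s + 1) • a + 1) * ((a ^ 2 - s • a + 1) * (a - 1)) := by
  have hC : C s ^ 2 + C s - 1 = 0 := by simpa using congrArg C hs
  have h : (X ^ 5 - 1 : R[X]) =
      (X ^ 2 + C (s + 1) * X + 1) * ((X ^ 2 - C s * X + 1) * (X - 1)) := by
    rw [C_add, C_1]
    linear_combination (X ^ 2 * (X - 1)) * hC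
  simpa [Algebra.smul_def] using congrArg (aeval a) h

theorem pow_five_sub_one_eq_mul_add {R A : Type*} [CommRing R] [Ring A] [Algebra R A] (a : A)
    (s : R) :
    a ^ 5 - 1 =
      (a ^ 3 + s • a ^ 2 + (s ^ 2 - 1) • a + (s ^ 3 - 2 * s) • 1) * (a ^ 2 - s • a + 1)
        + ((s ^ 4 - 3 * s ^ 2 + 1) • a - (s ^ 3 - 2 * s + 1) • 1) := by
  have h : (X ^ 5 - 1 : R[X]) = (X ^ 3 + C s * X ^ 2 + C (s ^ 2 - 1) * X + C (s ^ 3 - 2 * s))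
      * (X ^ 2 - C s * X + 1) + (C (s ^ 4 - 3 * s ^ 2 + 1) * X - C (s ^ 3 - 2 * s + 1)) := by
    simp only [map_sub, map_add, map_mul, map_pow, map_one, map_ofNat]
    ring
  simpa only [map_sub, map_add, map_mul, map_pow, map_one, aeval_X, aeval_C, Algebra.smul_def,
    mul_one] using congrArg (aeval a) h

theorem sq_add_sub_one_eq_zero_of_remainders {s : ℝ}
    (h₁ : (s ^ 4 - 3 * s ^ 2 + 1) * (s + 2) = 0)
    (h₂ : s ^ 4 - 3 * s ^ 2 + 1 + (s ^ 3 - 2 * s + 1) = 0) : s ^ 2 + s - 1 = 0 := by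
  by_contra hs
  have hsq : s ^ 2 = 2 := by
    have : (s ^ 2 + s - 1) * (s ^ 2 - 2) = 0 := by linear_combination h₂
    linarith [(mul_eq_zero.mp this).resolve_left hs]
  have : (s ^ 2 + s - 1) * ((s ^ 2 - s - 1) * (s + 2)) = 0 := by linear_combination h₁
  rcases mul_eq_zero.mp ((mul_eq_zero.mp this).resolve_left hs) with h | h <;> nlinarith

theorem eq_cos_pi_div_five_or_eq_cos_two_pi_div_five_iff {x : ℝ} (hx : 0 ≤ x) :
    (4 * x ^ 2 - 2) ^ 2 + (4 * x ^ 2 - 2) - 1 = 0 ↔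
      x = Real.cos (Real.pi / 5) ∨ x = Real.cos (2 * Real.pi / 5) := by
  have h5 : Real.sqrt 5 ^ 2 = 5 := Real.sq_sqrt (by norm_num)
  have h5pos : 0 < Real.sqrt 5 := by positivity
  have hcos₂ : Real.cos (2 * Real.pi / 5) = (Real.sqrt 5 - 1) / 4 := by
    rw [mul_div_assoc, Real.cos_two_mul, Real.cos_pi_div_five]
    linear_combination (1 / 8) * h5
  rw [Real.cos_pi_div_five, hcos₂]
  have hfactor : (4 * x ^ 2 - 2) ^ 2 + (4 * x ^ 2 - 2) - 1 =
      16 * ((x - (1 + Real.sqrt 5) / 4) * (x - (Real.sqrt 5 - 1) / 4)) *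
        ((x + (1 + Real.sqrt 5) / 4) * (x + (Real.sqrt 5 - 1) / 4)) := by
    linear_combination (2 * x ^ 2 - (3 + Real.sqrt 5 ^ 2) / 16) * h5
  have hpos : 0 < (x + (1 + Real.sqrt 5) / 4) * (x + (Real.sqrt 5 - 1) / 4) := by
    have : 1 < Real.sqrt 5 := by nlinarith
    apply mul_pos <;> linarith
  rw [hfactor, mul_eq_zero, or_iff_left hpos.ne', mul_eq_zero, or_iff_right (by norm_num),
    mul_eq_zero, sub_eq_zero, sub_eq_zero]

theorem linearIndependent_pair_of_span_singleton_ne {K V : Type*} [DivisionRing K]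
    [AddCommGroup V] [Module K V] {x y : V} (hx : x ≠ 0) (hy : y ≠ 0)
    (h : K ∙ x ≠ K ∙ y) :
    LinearIndependent K ![x, y] := by
  refine (LinearIndependent.pair_iff' hx).mpr fun a hay => h ?_
  have ha : a ≠ 0 := by rintro rfl; exact hy (by rw [← hay, zero_smul])
  rw [← hay, Submodule.span_singleton_smul_eq (IsUnit.mk0 a ha)]

lemma Quaternion.coe_eq_zero_iff {r : ℝ} : (r : ℍ) = 0 ↔ r = 0 :=
  ⟨fun h => Quaternion.coe_injective (h.trans Quaternion.coe_zero.symm), fun h => h ▸ rfl⟩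

section QuaternionicSpace

variable {n : ℕ}

local notation "E" => Fin n → ℍ

lemma op_coe_smul_eq_smul (r : ℝ) (x : E) : x <• (r : ℍ) = r • x := by
  funext i
  exact Quaternion.mul_coe_eq_smul _ _

lemma lineOf_eq_span (v : E) : lineOf v = (ℍᵐᵒᵖ ∙ v : Set E) := by
  ext x
  simp only [lineOf, Set.mem_ofPred_eq, SetLike.mem_coe, Submodule.mem_span_singleton,
    MulOpposite.exists]
  exact ⟨fun ⟨c, hc⟩ => ⟨c, hc.symm⟩, fun ⟨c, hc⟩ => ⟨c, hc.symm⟩⟩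

lemma qInner_add_right (x y z : E) : qInner x (y + z) = qInner x y + qInner x z := by
  simp [qInner, mul_add, Finset.sum_add_distrib]

lemma qInner_smul_right (x y : E) (c : ℍ) : qInner x (y <• c) = qInner x y * c := by
  simp [qInner, Finset.sum_mul, mul_assoc]

lemma star_qInner (x y : E) : star (qInner x y) = qInner y x := by
  simp [qInner, star_sum, star_mul]

lemma qInner_smul_left (x y : E) (c : ℍ) : qInner (x <• c) y = star c * qInner x y := by
  rw [← star_qInner, qInner_smul_right, star_mul, star_qInner]

lemma qInner_self_eq_sum (x : E) : qInner x x = ((∑ i, Quaternion.normSq (x i) : ℝ) : ℍ) := by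
  simp only [qInner, Quaternion.star_mul_self]
  exact (map_sum (algebraMap ℝ ℍ) _ _).symm

lemma qInner_self (x : E) : qInner x x = ((qNorm x ^ 2 : ℝ) : ℍ) := by
  rw [qNorm, qInner_self_eq_sum, Quaternion.re_coe,
    Real.sq_sqrt (Finset.sum_nonneg fun i _ => Quaternion.normSq_nonneg)]

lemma qNorm_nonneg (x : E) : 0 ≤ qNorm x := Real.sqrt_nonneg _

lemma qNorm_pos {x : E} (hx : x ≠ 0) : 0 < qNorm x := by
  obtain ⟨i, hi⟩ := Function.ne_iff.mp hx
  refine Real.sqrt_pos.mpr ?_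
  rw [qInner_self_eq_sum, Quaternion.re_coe]
  exact Finset.sum_pos' (fun j _ => Quaternion.normSq_nonneg)
    ⟨i, Finset.mem_univ i,
      Quaternion.normSq_nonneg.lt_of_ne' (Quaternion.normSq_ne_zero.mpr hi)⟩

lemma qInner_self_ne_zero {x : E} (hx : x ≠ 0) : qInner x x ≠ 0 := by
  rw [qInner_self, Ne, Quaternion.coe_eq_zero_iff]
  exact (pow_pos (qNorm_pos hx) 2).ne'

lemma qNorm_smul_right (x : E) (c : ℍ) : qNorm (x <• c) = qNorm x * ‖c‖ := by
  have h : qInner (x <• c) (x <• c) = (((qNorm x * ‖c‖) ^ 2 : ℝ) : ℍ) := by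
    rw [qInner_smul_left, qInner_smul_right, qInner_self, Quaternion.coe_mul_eq_smul,
      mul_smul_comm, Quaternion.star_mul_self, Quaternion.normSq_eq_norm_mul_self,
      Quaternion.smul_coe]
    ring_nf
  rw [qNorm, h, Quaternion.re_coe, Real.sqrt_sq (mul_nonneg (qNorm_nonneg x) (norm_nonneg c))]

def lineCos (v w : E) : ℝ := ‖qInner v w‖ / (qNorm v * qNorm w)

lemma lineCos_comm (v w : E) : lineCos v w = lineCos w v := by
  rw [lineCos, lineCos, ← star_qInner, Quaternion.norm_star, mul_comm (qNorm v)]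

lemma lineCos_nonneg (v w : E) : 0 ≤ lineCos v w :=
  div_nonneg (norm_nonneg _) (mul_nonneg (qNorm_nonneg v) (qNorm_nonneg w))

lemma atAngle_lineOf_iff {v w : E} (hv : v ≠ 0) (hw : w ≠ 0) (θ : ℝ) :
    atAngle (lineOf v) (lineOf w) θ ↔ lineCos v w = Real.cos θ := by
  rw [lineCos, div_eq_iff (mul_pos (qNorm_pos hv) (qNorm_pos hw)).ne']
  constructor
  · intro h
    simpa using h v ⟨1, by simp⟩ w ⟨1, by simp⟩ hv hw
  · rintro h _ ⟨a, rfl⟩ _ ⟨b, rfl⟩ - -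
    change ‖qInner (v <• a) (w <• b)‖ = Real.cos θ * (qNorm (v <• a) * qNorm (w <• b))
    rw [qInner_smul_left, qInner_smul_right, norm_mul, norm_mul, Quaternion.norm_star, h,
      qNorm_smul_right, qNorm_smul_right]
    ring

lemma eq_zero_of_smul_add_smul_eq_zero {v w : E} (hv : v ≠ 0) (hw : w ≠ 0)
    (hne : lineOf v ≠ lineOf w) {a b : ℍ} (h : v <• a + w <• b = 0) : a = 0 ∧ b = 0 := by
  have hspan : ℍᵐᵒᵖ ∙ v ≠ ℍᵐᵒᵖ ∙ w := fun h' =>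
    hne (by rw [lineOf_eq_span, lineOf_eq_span, h'])
  simpa using LinearIndependent.pair_iff.mp
    (linearIndependent_pair_of_span_singleton_ne hv hw hspan) (.op a) (.op b) h

lemma reflectIn_eq (α y : E) : reflectIn α y = y - α <• (2 / qInner α α * qInner α y) := rfl

-- `ℍᵐᵒᵖ` acts on `ℍⁿ` by right multiplication, so `Module.End ℍᵐᵒᵖ` consists of
-- the ℍ-linear maps of the paper.
def reflection (α : E) : Module.End ℍᵐᵒᵖ E where
  toFun := reflectIn α
  map_add' y z := by
    simp only [reflectIn_eq, qInner_add_right, mul_add, MulOpposite.op_add, add_smul]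
    abel
  map_smul' a y := by
    induction a using MulOpposite.rec' with | _ c
    simp only [reflectIn_eq, RingHom.id_apply, qInner_smul_right, smul_sub, smul_smul,
      ← MulOpposite.op_mul, mul_assoc]

lemma reflection_apply (α y : E) :
    reflection α y = y - α <• (2 / qInner α α * qInner α y) := reflectIn_eq α y

lemma reflection_self {α : E} (hα : α ≠ 0) : reflection α α = -α := by
  rw [reflection_apply, div_mul_cancel₀ _ (qInner_self_ne_zero hα),
    show (2 : ℍ) = ((2 : ℝ) : ℍ) by norm_cast, op_coe_smul_eq_smul]
  module

lemma reflection_reflection {α : E} (hα : α ≠ 0) (y : E) :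
    reflection α (reflection α y) = y := by
  conv_lhs => rw [reflection_apply α y, map_sub, map_smul, reflection_self hα, smul_neg,
    reflection_apply]
  abel

lemma reflection_apply_sub_mem_span (α y : E) : reflection α y - y ∈ ℍᵐᵒᵖ ∙ α := by
  rw [reflection_apply, sub_sub_cancel_left]
  exact neg_mem (Submodule.smul_mem _ _ (Submodule.mem_span_singleton_self α))

lemma reflection_coeff_mul_reflection_coeff {v w : E} (hv : v ≠ 0) (hw : w ≠ 0) :
    2 / qInner v v * qInner v w * (2 / qInner w w * qInner w v) =
      ((4 * lineCos v w ^ 2 : ℝ) : ℍ) := by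
  have hv' := qNorm_pos hv
  have hw' := qNorm_pos hw
  rw [qInner_self, qInner_self, ← star_qInner v w,
    show (2 : ℍ) = ((2 : ℝ) : ℍ) by norm_cast, ← Quaternion.coe_div, ← Quaternion.coe_div,
    Quaternion.coe_mul_eq_smul, Quaternion.coe_mul_eq_smul, smul_mul_smul_comm,
    Quaternion.self_mul_star, Quaternion.normSq_eq_norm_mul_self, Quaternion.smul_coe, lineCos]
  congr 1
  field_simp
  ring

lemma reflection_apply_reflection_add {v w : E} (hv : v ≠ 0) (hw : w ≠ 0) :
    reflection v (reflection w v) + reflection w (reflection v v) =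
      (4 * lineCos v w ^ 2 - 2) • v := by
  rw [reflection_self hv, map_neg, reflection_apply w v, map_sub, map_smul, reflection_self hv,
    reflection_apply v w, smul_sub, smul_smul, ← MulOpposite.op_mul,
    reflection_coeff_mul_reflection_coeff hv hw, op_coe_smul_eq_smul, sub_smul, two_smul]
  abel

lemma reflection_add_reflection_apply_of_mem_span {v w y : E} (hv : v ≠ 0) (hw : w ≠ 0)
    (hy : y ∈ Submodule.span ℍᵐᵒᵖ {v, w}) :
    reflection v (reflection w y) + reflection w (reflection v y) =
      (4 * lineCos v w ^ 2 - 2) • y := by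
  set D := reflection v * reflection w + reflection w * reflection v -
    algebraMap ℝ (Module.End ℍᵐᵒᵖ E) (4 * lineCos v w ^ 2 - 2)
  have hD : Submodule.span ℍᵐᵒᵖ {v, w} ≤ LinearMap.ker D := by
    refine Submodule.span_le.mpr (Set.insert_subset_iff.mpr
      ⟨?_, Set.singleton_subset_iff.mpr ?_⟩) <;>
    simp only [SetLike.mem_coe, LinearMap.mem_ker, D, LinearMap.sub_apply, LinearMap.add_apply,
      Module.End.mul_apply, Module.algebraMap_end_apply, sub_eq_zero]
    · exact reflection_apply_reflection_add hv hw
    · rw [add_comm, lineCos_comm]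
      exact reflection_apply_reflection_add hw hv
  simpa only [LinearMap.mem_ker, D, LinearMap.sub_apply, LinearMap.add_apply,
    Module.End.mul_apply, Module.algebraMap_end_apply, sub_eq_zero] using hD hy

lemma reflection_mul_reflection_apply_apply_of_mem_span {v w y : E} (hv : v ≠ 0) (hw : w ≠ 0)
    (hy : y ∈ Submodule.span ℍᵐᵒᵖ {v, w}) :
    (reflection v * reflection w) ((reflection v * reflection w) y) =
      (4 * lineCos v w ^ 2 - 2) • (reflection v * reflection w) y - y := by
  set T := reflection v * reflection w
  have hinv : T (reflection w (reflection v y)) = y := by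
    rw [Module.End.mul_apply, reflection_reflection hw, reflection_reflection hv]
  rw [eq_sub_iff_add_eq, ← LinearMap.map_smul_of_tower,
    ← reflection_add_reflection_apply_of_mem_span hv hw hy, map_add, hinv]
  rfl

lemma reflection_mul_reflection_apply_sub_mem_span (v w u : E) :
    (reflection v * reflection w) u - u ∈ Submodule.span ℍᵐᵒᵖ {v, w} := by
  rw [Module.End.mul_apply, ← sub_add_sub_cancel _ (reflection w u)]
  exact add_mem
    (Submodule.span_mono (Set.singleton_subset_iff.mpr (Set.mem_insert v {w}))
      (reflection_apply_sub_mem_span v _))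
    (Submodule.span_mono (Set.subset_insert v {w}) (reflection_apply_sub_mem_span w u))

lemma reflection_mul_reflection_charpoly_mul_sub_one {v w : E} (hv : v ≠ 0) (hw : w ≠ 0) :
    ((reflection v * reflection w) ^ 2 -
        (4 * lineCos v w ^ 2 - 2) • (reflection v * reflection w) + 1) *
      (reflection v * reflection w - 1) = 0 := by
  refine LinearMap.ext fun u => ?_
  have h := reflection_mul_reflection_apply_apply_of_mem_span hv hw
    (reflection_mul_reflection_apply_sub_mem_span v w u)
  set T := reflection v * reflection w
  simp only [Module.End.mul_apply, LinearMap.add_apply, LinearMap.sub_apply, LinearMap.smul_apply,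
    Module.End.one_apply, pow_two T, LinearMap.zero_apply]
  rw [h]
  abel

lemma reflection_mul_reflection_apply_right (v : E) {w : E} (hw : w ≠ 0) :
    (reflection v * reflection w) w = v <• (2 / qInner v v * qInner v w) - w := by
  rw [Module.End.mul_apply, reflection_self hw, map_neg, reflection_apply, neg_sub]

lemma reflection_mul_reflection_ne_one {v w : E} (hv : v ≠ 0) (hw : w ≠ 0)
    (hne : lineOf v ≠ lineOf w) : reflection v * reflection w ≠ 1 := by
  intro h
  have hfix := LinearMap.congr_fun h w
  rw [reflection_mul_reflection_apply_right v hw, Module.End.one_apply] at hfix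
  have hcomb : v <• (2 / qInner v v * qInner v w) + w <• ((-2 : ℝ) : ℍ) = 0 := by
    rw [op_coe_smul_eq_smul, neg_smul, two_smul, ← sub_eq_zero.mpr hfix]
    abel
  have h2 := Quaternion.coe_eq_zero_iff.mp (eq_zero_of_smul_add_smul_eq_zero hv hw hne hcomb).2
  norm_num at h2

theorem sq_add_sub_one_eq_zero_of_pow_five_eq_one {v w : E} (hv : v ≠ 0) (hw : w ≠ 0)
    (hne : lineOf v ≠ lineOf w) (h5 : (reflection v * reflection w) ^ 5 = 1) :
    (4 * lineCos v w ^ 2 - 2) ^ 2 + (4 * lineCos v w ^ 2 - 2) - 1 = 0 := by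
  have hcharpoly := reflection_mul_reflection_apply_apply_of_mem_span hv hw
    (Submodule.subset_span (Set.mem_insert_of_mem v rfl) : w ∈ Submodule.span ℍᵐᵒᵖ {v, w})
  set s := 4 * lineCos v w ^ 2 - 2
  set T := reflection v * reflection w
  have hP : (T ^ 2 - s • T + 1 : Module.End ℍᵐᵒᵖ E) w = 0 := by
    simp only [LinearMap.add_apply, LinearMap.sub_apply, LinearMap.smul_apply,
      Module.End.one_apply, pow_two T, Module.End.mul_apply, hcharpoly]
    abel
  have h := LinearMap.congr_fun (pow_five_sub_one_eq_mul_add T s) w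
  rw [h5, sub_self, LinearMap.add_apply, Module.End.mul_apply, hP, map_zero, zero_add,
    LinearMap.zero_apply, LinearMap.sub_apply, LinearMap.smul_apply, LinearMap.smul_apply,
    Module.End.one_apply, reflection_mul_reflection_apply_right v hw] at h
  have hkm := reflection_coeff_mul_reflection_coeff hv hw
  set k := 2 / qInner v v * qInner v w
  have hcomb : v <• (((s ^ 4 - 3 * s ^ 2 + 1 : ℝ) : ℍ) * k) +
      w <• ((-(s ^ 4 - 3 * s ^ 2 + 1 + (s ^ 3 - 2 * s + 1)) : ℝ) : ℍ) = 0 := by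
    rw [MulOpposite.op_mul, mul_smul, op_coe_smul_eq_smul, op_coe_smul_eq_smul, smul_comm]
    generalize v <• k = x at h ⊢
    linear_combination (norm := module) -h
  obtain ⟨hv', hw'⟩ := eq_zero_of_smul_add_smul_eq_zero hv hw hne hcomb
  refine sq_add_sub_one_eq_zero_of_remainders ?_
    (neg_eq_zero.mp (Quaternion.coe_eq_zero_iff.mp hw'))
  -- `k` may vanish, but its product with the coefficient of `r_w v` is `s + 2`.
  have h₁ := congrArg (· * (2 / qInner w w * qInner w v)) hv'
  rw [zero_mul, mul_assoc, hkm, ← Quaternion.coe_mul, Quaternion.coe_eq_zero_iff] at h₁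
  linear_combination h₁

theorem orderOf_reflection_mul_reflection_eq_five_iff {v w : E} (hv : v ≠ 0) (hw : w ≠ 0)
    (hne : lineOf v ≠ lineOf w) :
    orderOf (reflection v * reflection w) = 5 ↔
      (4 * lineCos v w ^ 2 - 2) ^ 2 + (4 * lineCos v w ^ 2 - 2) - 1 = 0 := by
  have : Fact (Nat.Prime 5) := ⟨Nat.prime_five⟩
  refine ⟨fun h => sq_add_sub_one_eq_zero_of_pow_five_eq_one hv hw hne
    (h ▸ pow_orderOf_eq_one _),
    fun hs => orderOf_eq_prime ?_ (reflection_mul_reflection_ne_one hv hw hne)⟩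
  rw [← sub_eq_zero, pow_five_sub_one_eq_mul_mul _ hs,
    reflection_mul_reflection_charpoly_mul_sub_one hv hw, mul_zero]

lemma orderOf_reflectIn_comp_reflectIn (v w : E) :
    orderOf (show Function.End E from reflectIn v ∘ reflectIn w) =
      orderOf (reflection v * reflection w) :=
  orderOf_injective (MulAction.toEndHom : Module.End ℍᵐᵒᵖ E →* Function.End E)
    (fun _ _ h => LinearMap.ext (congrFun h)) (reflection v * reflection w)

end QuaternionicSpace

/-- For distinct lines `ℓ = vℍ` and `ℓ' = wℍ`, the composite `r_ℓ ∘ r_{ℓ'}` of the order-2 reflections has order 5 (as an invertible ℍ-linear map) iff the angle between `ℓ` and `ℓ'` is `π/5` or `2π/5`. -/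
theorem reflections_product_order_5 (n : ℕ) (v w : Fin n → ℍ)
    (hv : v ≠ 0) (hw : w ≠ 0) (hne : lineOf v ≠ lineOf w) :
    orderOf (show Function.End (Fin n → ℍ) from reflectIn v ∘ reflectIn w) = 5 ↔
      (atAngle (lineOf v) (lineOf w) (Real.pi / 5) ∨ atAngle (lineOf v) (lineOf w) (2 * Real.pi / 5)) := by
  rw [orderOf_reflectIn_comp_reflectIn, orderOf_reflection_mul_reflection_eq_five_iff hv hw hne,
    atAngle_lineOf_iff hv hw, atAngle_lineOf_iff hv hw]
  exact eq_cos_pi_div_five_or_eq_cos_two_pi_div_five_iff (lineCos_nonneg v w)
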